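/- arXiv:2310.07973 — 2 statements merged into one kernel-verified Lean document; each statement's English description precedes it below -/
import Mathlib

section
/- Hoeffding-type covariance identity: if X and Y are real random variables with finite second moments and ψ : ℝ → ℝ is continuous with ψ(X), ψ(Y) square-integrable, then Cov(ψ(X), ψ(Y)) = ∫∫ [P(X < a, Y < b) − P(X < a)·P(Y < b)] dψ(a) dψ(b), where the integral is with respect to the (Lebesgue–Stieltjes) measure induced by ψ in each coordinate. -/
open MeasureTheory ProbabilityTheory Set

/-!
Realise an independent copy `(X', Y')` of `(X, Y)` on `(Ω × Ω, P ⊗ P)`; then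
`2 Cov(ψ X, ψ Y) = E[(ψ X - ψ X') (ψ Y - ψ Y')]`. Each difference `ψ x - ψ x'` is the
`dψ`-integral of `1{x' < a} - 1{x < a}`, the indicator of the oriented interval `(x', x]`, so by
Fubini the right side is `∫∫ E[(1{X' < a} - 1{X < a}) (1{Y' < b} - 1{Y < b})] dψ(a) dψ(b)`, and the
same copy identity applied to these indicators turns the integrand into
`2 (P(X < a, Y < b) - P(X < a) P(Y < b))`. Fubini applies because
`∫ |1{x' < a} - 1{x < a}| dψ(a) = |ψ x - ψ x'|`, which makes the kernel integrable exactly when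
`(ψ X - ψ X') (ψ Y - ψ Y')` is.
-/

noncomputable def orientedIndicator (x y : ℝ) : ℝ → ℝ :=
  (Ioc y x).indicator 1 - (Ioc x y).indicator 1

lemma orientedIndicator_apply (x y a : ℝ) :
    orientedIndicator x y a = (Iio a).indicator 1 y - (Iio a).indicator 1 x := by
  simp only [orientedIndicator, Pi.sub_apply, indicator_apply, mem_Ioc, mem_Iio, Pi.one_apply]
  split_ifs <;> grind

lemma abs_orientedIndicator (x y a : ℝ) :
    |orientedIndicator x y a| = (Ioc y x).indicator 1 a + (Ioc x y).indicator 1 a := by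
  simp only [orientedIndicator, Pi.sub_apply, indicator_apply, mem_Ioc, Pi.one_apply]
  split_ifs <;> grind

lemma measurable_orientedIndicator :
    Measurable fun q : ℝ × ℝ × ℝ => orientedIndicator q.1 q.2.1 q.2.2 := by
  simp only [orientedIndicator_apply, indicator_apply, mem_Iio, Pi.one_apply]
  exact (Measurable.ite (measurableSet_lt (by fun_prop) (by fun_prop)) measurable_const
    measurable_const).sub
    (Measurable.ite (measurableSet_lt (by fun_prop) (by fun_prop)) measurable_const
    measurable_const)

section Stieltjes

variable (f : StieltjesFunction ℝ)

lemma integrable_indicator_one_Ioc (c d : ℝ) :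
    Integrable ((Ioc c d).indicator (1 : ℝ → ℝ)) f.measure :=
  (integrableOn_const measure_Ioc_lt_top.ne).integrable_indicator measurableSet_Ioc

lemma integral_indicator_one_Ioc (c d : ℝ) :
    ∫ a, (Ioc c d).indicator 1 a ∂f.measure = max (f d - f c) 0 := by
  rw [integral_indicator_one measurableSet_Ioc, measureReal_def, f.measure_Ioc,
    ENNReal.toReal_ofReal']

lemma integrable_orientedIndicator (x y : ℝ) : Integrable (orientedIndicator x y) f.measure :=
  (integrable_indicator_one_Ioc f y x).sub (integrable_indicator_one_Ioc f x y)

lemma integral_orientedIndicator (x y : ℝ) :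
    ∫ a, orientedIndicator x y a ∂f.measure = f x - f y := by
  rw [orientedIndicator, integral_sub' (integrable_indicator_one_Ioc f y x)
    (integrable_indicator_one_Ioc f x y), integral_indicator_one_Ioc, integral_indicator_one_Ioc,
    ← neg_sub (f x), max_zero_sub_max_neg_zero_eq_self]

lemma integral_abs_orientedIndicator (x y : ℝ) :
    ∫ a, |orientedIndicator x y a| ∂f.measure = |f x - f y| := by
  simp_rw [abs_orientedIndicator]
  rw [integral_add (integrable_indicator_one_Ioc f y x) (integrable_indicator_one_Ioc f x y),
    integral_indicator_one_Ioc, integral_indicator_one_Ioc, ← neg_sub (f x),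
    max_zero_add_max_neg_zero_eq_abs_self]

end Stieltjes

lemma prod_sub_mul_sub_eq {Ω : Type*} (u v : Ω → ℝ) :
    (fun p : Ω × Ω => (u p.1 - u p.2) * (v p.1 - v p.2))
      = (fun p => (u * v) p.1) + (fun p => (u * v) p.2) - (fun p => u p.1 * v p.2)
        - fun p => v p.1 * u p.2 := by
  ext p
  simp only [Pi.add_apply, Pi.sub_apply, Pi.mul_apply]
  ring

section IndependentCopy

variable {Ω : Type*} [MeasurableSpace Ω] {P : Measure Ω} [IsProbabilityMeasure P] {u v : Ω → ℝ}

lemma integrable_prod_sub_mul_sub (hu : Integrable u P) (hv : Integrable v P)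
    (huv : Integrable (u * v) P) :
    Integrable (fun p : Ω × Ω => (u p.1 - u p.2) * (v p.1 - v p.2)) (P.prod P) := by
  rw [prod_sub_mul_sub_eq]
  exact (((huv.comp_fst P).add (huv.comp_snd P)).sub (hu.mul_prod hv)).sub (hv.mul_prod hu)

lemma integral_prod_sub_mul_sub (hu : Integrable u P) (hv : Integrable v P)
    (huv : Integrable (u * v) P) :
    ∫ p, (u p.1 - u p.2) * (v p.1 - v p.2) ∂(P.prod P)
      = 2 * (∫ ω, u ω * v ω ∂P - (∫ ω, u ω ∂P) * ∫ ω, v ω ∂P) := by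
  rw [prod_sub_mul_sub_eq, integral_sub' (((huv.comp_fst P).add (huv.comp_snd P)).sub
    (hu.mul_prod hv)) (hv.mul_prod hu), integral_sub' ((huv.comp_fst P).add (huv.comp_snd P))
    (hu.mul_prod hv), integral_add' (huv.comp_fst P) (huv.comp_snd P), integral_fun_fst,
    integral_fun_snd, integral_prod_mul, integral_prod_mul]
  simp only [probReal_univ, one_smul, Pi.mul_apply]
  ring

end IndependentCopy

section Fubini

variable {α : Type*} [MeasurableSpace α] {μ : Measure α} (f g : StieltjesFunction ℝ)
  {x₁ x₂ y₁ y₂ : α → ℝ}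

lemma integrable_orientedIndicator_mul_prod (hx₁ : Measurable x₁) (hx₂ : Measurable x₂)
    (hy₁ : Measurable y₁) (hy₂ : Measurable y₂)
    (h : Integrable (fun w => (f (x₁ w) - f (x₂ w)) * (g (y₁ w) - g (y₂ w))) μ) :
    Integrable (fun q : α × ℝ × ℝ =>
        orientedIndicator (x₁ q.1) (x₂ q.1) q.2.1 * orientedIndicator (y₁ q.1) (y₂ q.1) q.2.2)
      (μ.prod (f.measure.prod g.measure)) := by
  have hmeas : Measurable fun q : α × ℝ × ℝ =>
      orientedIndicator (x₁ q.1) (x₂ q.1) q.2.1 * orientedIndicator (y₁ q.1) (y₂ q.1) q.2.2 :=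
    (measurable_orientedIndicator.comp (f := fun q : α × ℝ × ℝ => (x₁ q.1, x₂ q.1, q.2.1))
      (by fun_prop)).mul
    (measurable_orientedIndicator.comp (f := fun q : α × ℝ × ℝ => (y₁ q.1, y₂ q.1, q.2.2))
      (by fun_prop))
  rw [integrable_prod_iff hmeas.aestronglyMeasurable]
  constructor
  · exact .of_forall fun w =>
      (integrable_orientedIndicator f (x₁ w) (x₂ w)).mul_prod
        (integrable_orientedIndicator g (y₁ w) (y₂ w))
  · refine h.norm.congr (.of_forall fun w => ?_)
    simp only [norm_mul, Real.norm_eq_abs]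
    rw [integral_prod_mul (fun a => |orientedIndicator (x₁ w) (x₂ w) a|)
      (fun b => |orientedIndicator (y₁ w) (y₂ w) b|), integral_abs_orientedIndicator,
      integral_abs_orientedIndicator]

lemma integral_sub_mul_sub_eq_integral_integral [SFinite μ] (hx₁ : Measurable x₁)
    (hx₂ : Measurable x₂) (hy₁ : Measurable y₁) (hy₂ : Measurable y₂)
    (h : Integrable (fun w => (f (x₁ w) - f (x₂ w)) * (g (y₁ w) - g (y₂ w))) μ) :
    ∫ w, (f (x₁ w) - f (x₂ w)) * (g (y₁ w) - g (y₂ w)) ∂μ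
      = ∫ a, ∫ b, ∫ w, orientedIndicator (x₁ w) (x₂ w) a * orientedIndicator (y₁ w) (y₂ w) b ∂μ
          ∂g.measure ∂f.measure := by
  have hK := integrable_orientedIndicator_mul_prod f g hx₁ hx₂ hy₁ hy₂ h
  calc ∫ w, (f (x₁ w) - f (x₂ w)) * (g (y₁ w) - g (y₂ w)) ∂μ
      = ∫ w, ∫ p, orientedIndicator (x₁ w) (x₂ w) p.1 * orientedIndicator (y₁ w) (y₂ w) p.2
          ∂(f.measure.prod g.measure) ∂μ := by
        congr 1 with w
        rw [integral_prod_mul (orientedIndicator (x₁ w) (x₂ w)) (orientedIndicator (y₁ w) (y₂ w)),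
          integral_orientedIndicator, integral_orientedIndicator]
    _ = ∫ p, ∫ w, orientedIndicator (x₁ w) (x₂ w) p.1 * orientedIndicator (y₁ w) (y₂ w) p.2 ∂μ
          ∂(f.measure.prod g.measure) := integral_integral_swap hK
    _ = _ := integral_prod _ hK.integral_prod_right

end Fubini

section Indicators

variable {Ω : Type*} [MeasurableSpace Ω] {P : Measure Ω} [IsProbabilityMeasure P] {X Y : Ω → ℝ}

lemma integral_prod_orientedIndicator_mul (hX : Measurable X) (hY : Measurable Y) (a b : ℝ) :
    ∫ w, orientedIndicator (X w.1) (X w.2) a * orientedIndicator (Y w.1) (Y w.2) b ∂(P.prod P)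
      = 2 * ((P {ω | X ω < a ∧ Y ω < b}).toReal
          - (P {ω | X ω < a}).toReal * (P {ω | Y ω < b}).toReal) := by
  have hA : MeasurableSet {ω | X ω < a} := hX measurableSet_Iio
  have hB : MeasurableSet {ω | Y ω < b} := hY measurableSet_Iio
  set u : Ω → ℝ := {ω | X ω < a}.indicator 1 with hu_def
  set v : Ω → ℝ := {ω | Y ω < b}.indicator 1 with hv_def
  have hu : Integrable u P := (integrable_const 1).indicator hA
  have hv : Integrable v P := (integrable_const 1).indicator hB
  have huv : Integrable (u * v) P := by
    rw [hu_def, hv_def, ← inter_indicator_one]; exact (integrable_const 1).indicator (hA.inter hB)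
  calc _ = ∫ w, (u w.1 - u w.2) * (v w.1 - v w.2) ∂(P.prod P) := by
        congr 1 with w
        rw [orientedIndicator_apply, orientedIndicator_apply]
        change (u w.2 - u w.1) * (v w.2 - v w.1) = _
        ring
    _ = _ := by
        have eu : ∫ ω, u ω ∂P = (P {ω | X ω < a}).toReal := integral_indicator_one hA
        have ev : ∫ ω, v ω ∂P = (P {ω | Y ω < b}).toReal := integral_indicator_one hB
        have euv : ∫ ω, u ω * v ω ∂P = (P {ω | X ω < a ∧ Y ω < b}).toReal := by
          change ∫ ω, (u * v) ω ∂P = _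
          rw [hu_def, hv_def, ← inter_indicator_one]
          exact integral_indicator_one (hA.inter hB)
        rw [integral_prod_sub_mul_sub hu hv huv, euv, eu, ev]

end Indicators

theorem hoeffding_covariance_identity_general {Ω : Type*} [MeasurableSpace Ω]
    (P : Measure Ω) [IsProbabilityMeasure P] (X Y : Ω → ℝ)
    (hX : Measurable X) (hY : Measurable Y)
    (ψ : StieltjesFunction ℝ)
    (hψX2 : MemLp (fun ω => ψ (X ω)) 2 P) (hψY2 : MemLp (fun ω => ψ (Y ω)) 2 P) :
    ∫ ω, ψ (X ω) * ψ (Y ω) ∂P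
        - (∫ ω, ψ (X ω) ∂P) * (∫ ω, ψ (Y ω) ∂P)
      = ∫ a, ∫ b, ((P {ω | X ω < a ∧ Y ω < b}).toReal
          - (P {ω | X ω < a}).toReal * (P {ω | Y ω < b}).toReal)
            ∂ψ.measure ∂ψ.measure := by
  have hψX := hψX2.integrable one_le_two
  have hψY := hψY2.integrable one_le_two
  have hψXY := hψX2.integrable_mul hψY2
  have hfubini := integral_sub_mul_sub_eq_integral_integral ψ ψ (x₁ := fun w : Ω × Ω => X w.1)
    (x₂ := fun w => X w.2) (y₁ := fun w => Y w.1) (y₂ := fun w => Y w.2) (by fun_prop)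
    (by fun_prop) (by fun_prop) (by fun_prop) (integrable_prod_sub_mul_sub hψX hψY hψXY)
  refine mul_left_cancel₀ (two_ne_zero (α := ℝ)) ?_
  rw [← integral_prod_sub_mul_sub hψX hψY hψXY, hfubini, ← integral_const_mul]
  simp only [integral_prod_orientedIndicator_mul hX hY, integral_const_mul]

/-- Hoeffding-type covariance identity: for real random variables `X, Y` with finite
second moments and a continuous (Stieltjes) function `ψ` with `ψ(X), ψ(Y)`
square-integrable,
`Cov(ψ(X), ψ(Y)) = ∫∫ [P(X < a, Y < b) − P(X < a)·P(Y < b)] dψ(a) dψ(b)`,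
where the integrals are with respect to the Lebesgue–Stieltjes measure induced by `ψ`. -/
theorem hoeffding_covariance_identity {Ω : Type*} [MeasurableSpace Ω]
    (P : Measure Ω) [IsProbabilityMeasure P] (X Y : Ω → ℝ)
    (hX : Measurable X) (hY : Measurable Y)
    (hX2 : MemLp X 2 P) (hY2 : MemLp Y 2 P)
    (ψ : StieltjesFunction ℝ) (hψcont : Continuous ψ)
    (hψX2 : MemLp (fun ω => ψ (X ω)) 2 P) (hψY2 : MemLp (fun ω => ψ (Y ω)) 2 P) :
    ∫ ω, ψ (X ω) * ψ (Y ω) ∂P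
        - (∫ ω, ψ (X ω) ∂P) * (∫ ω, ψ (Y ω) ∂P)
      = ∫ a, ∫ b, ((P {ω | X ω < a ∧ Y ω < b}).toReal
          - (P {ω | X ω < a}).toReal * (P {ω | Y ω < b}).toReal)
            ∂ψ.measure ∂ψ.measure :=
  hoeffding_covariance_identity_general P X Y hX hY ψ hψX2 hψY2
end

section
/- Order statistics are positively quadrant dependent: if S_1, ..., S_n are i.i.d. real random variables with continuous distribution and S_{(i)}, S_{(j)} denote the i-th and j-th order statistics (i < j), then for all real a, b, P(S_{(i)} < a, S_{(j)} < b) ≥ P(S_{(i)} < a)·P(S_{(j)} < b). -/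
/-!
`S_(i) < a` holds exactly when at least `i + 1` of the `S_k` are below `a`, so both events are
preimages, under the sample vector `ω ↦ (S_k ω)_k`, of lower sets of `ℝⁿ`. By independence the
law of the sample vector is a product measure, and under a product measure any two lower sets are
positively correlated (Harris). Harris' inequality follows by induction on the number of
coordinates: integrating out the first coordinate leaves two antitone functions of one real
variable, and those are positively correlated by Chebyshev's integral inequality.
-/

open MeasureTheory ProbabilityTheory

/-- The `i`-th order statistic (ascending) of the sample `fun k => S k ω`. -/
noncomputable def orderStat {Ω : Type*} {n : ℕ} (S : Fin n → Ω → ℝ) (i : Fin n) (ω : Ω) : ℝ :=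
  (fun k => S k ω) (Tuple.sort (fun k => S k ω) i)

open Finset ENNReal

theorem Tuple.apply_sort_lt_iff_lt_card {α : Type*} [LinearOrder α] {n : ℕ} (f : Fin n → α)
    (i : Fin n) (t : α) : f (sort f i) < t ↔ i < #{k | f k < t} := by
  have hcard : #{k | f (sort f k) < t} = #{k | f k < t} :=
    card_equiv (sort f) fun k => by simp
  rw [← hcard]
  exact (lt_card_lt_iff_apply_lt_of_monotone (monotone_sort f)).symm

theorem orderStat_lt_iff {Ω : Type*} {n : ℕ} (S : Fin n → Ω → ℝ) (i : Fin n) (ω : Ω) (t : ℝ) :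
    orderStat S i ω < t ↔ (i : ℕ) < #{k | S k ω < t} :=
  Tuple.apply_sort_lt_iff_lt_card (fun k => S k ω) i t

theorem isLowerSet_setOf_lt_card_filter_lt {ι α : Type*} [Fintype ι] [Preorder α]
    [DecidableLT α] (m : ℕ) (c : α) : IsLowerSet {x : ι → α | m < #{k | x k < c}} :=
  fun x y hyx hx => hx.trans_le <| card_le_card fun k hk => by
    simp only [mem_filter, mem_univ, true_and] at hk ⊢
    exact (hyx k).trans_lt hk

theorem measurableSet_setOf_lt_card_filter_lt {ι α : Type*} [Fintype ι] [LinearOrder α]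
    [TopologicalSpace α] [OrderClosedTopology α] [MeasurableSpace α] [OpensMeasurableSpace α]
    (m : ℕ) (c : α) : MeasurableSet {x : ι → α | m < #{k | x k < c}} := by
  have hcard : Measurable fun x : ι → α => #{k | x k < c} := by
    simp_rw [card_filter]
    exact Finset.measurable_sum _ fun k _ =>
      Measurable.ite (measurable_pi_apply k measurableSet_Iio) measurable_const measurable_const
  exact hcard (measurableSet_Ioi (a := m))

theorem IsLowerSet.antitone_indicator_one {β M : Type*} [Preorder β] [Zero M] [One M]
    [Preorder M] [ZeroLEOneClass M] {s : Set β} (hs : IsLowerSet s) :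
    Antitone (s.indicator (1 : β → M)) := fun x y hxy => by
  by_cases hy : y ∈ s
  · simp [hy, hs hxy hy]
  · rw [Set.indicator_of_notMem hy]
    exact Set.indicator_nonneg (fun _ _ => zero_le_one) x

theorem ENNReal.mul_add_mul_le_mul_add_mul {a b c d : ℝ≥0∞} (hab : a ≤ b) (hcd : c ≤ d) :
    a * d + b * c ≤ a * c + b * d := by
  obtain ⟨d, rfl⟩ := exists_add_of_le hcd
  calc a * (c + d) + b * c = a * c + a * d + b * c := by ring
    _ ≤ a * c + b * d + b * c := by gcongr
    _ = a * c + b * (c + d) := by ring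

theorem Monovary.ennreal_mul_add_mul_le_mul_add_mul {ι : Type*} {f g : ι → ℝ≥0∞}
    (hfg : Monovary f g) (i j : ι) : f i * g j + f j * g i ≤ f i * g i + f j * g j := by
  rcases lt_trichotomy (g i) (g j) with h | h | h
  · exact ENNReal.mul_add_mul_le_mul_add_mul (hfg h) h.le
  · rw [h]
  · rw [add_comm (f i * g j), add_comm (f i * g i)]
    exact ENNReal.mul_add_mul_le_mul_add_mul (hfg h) h.le

theorem Measurable.finCons {X : Type*} [MeasurableSpace X] {n : ℕ} {α : Fin (n + 1) → Type*}
    [∀ k, MeasurableSpace (α k)] {f : X → α 0} {g : X → ∀ k : Fin n, α k.succ}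
    (hf : Measurable f) (hg : Measurable g) :
    Measurable fun x => (Fin.cons (f x) (g x) : ∀ k, α k) :=
  measurable_pi_iff.2 fun k => Fin.cases hf (fun k => (measurable_pi_apply k).comp hg) k

namespace MeasureTheory

/-- **Chebyshev's integral inequality**. -/
theorem lintegral_mul_lintegral_le_lintegral_mul_of_monovary {α : Type*} [MeasurableSpace α]
    (μ : Measure α) [IsProbabilityMeasure μ] {f g : α → ℝ≥0∞} (hf : Measurable f)
    (hg : Measurable g) (hfg : Monovary f g) :
    (∫⁻ x, f x ∂μ) * ∫⁻ x, g x ∂μ ≤ ∫⁻ x, f x * g x ∂μ := by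
  have hcross : ∫⁻ x, ∫⁻ y, f x * g y + f y * g x ∂μ ∂μ
      = 2 * ((∫⁻ x, f x ∂μ) * ∫⁻ x, g x ∂μ) := by
    simp_rw [lintegral_add_left (hg.const_mul _), lintegral_const_mul _ hg,
      lintegral_mul_const _ hf]
    rw [lintegral_add_left (hf.mul_const _), lintegral_mul_const _ hf, lintegral_const_mul _ hg]
    ring
  have hdiag : ∫⁻ x, ∫⁻ y, f x * g x + f y * g y ∂μ ∂μ = 2 * ∫⁻ x, f x * g x ∂μ := by
    simp_rw [lintegral_add_left measurable_const, lintegral_const, measure_univ, mul_one]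
    rw [lintegral_add_right _ measurable_const, lintegral_const, measure_univ, mul_one]
    ring
  have h : ∫⁻ x, ∫⁻ y, f x * g y + f y * g x ∂μ ∂μ
      ≤ ∫⁻ x, ∫⁻ y, f x * g x + f y * g y ∂μ ∂μ :=
    lintegral_mono fun x => lintegral_mono fun y => hfg.ennreal_mul_add_mul_le_mul_add_mul x y
  rw [hcross, hdiag] at h
  exact (ENNReal.mul_le_mul_iff_right two_ne_zero ofNat_ne_top).mp h

theorem lintegral_pi_fin_succ {α : Type*} [MeasurableSpace α] {n : ℕ}
    (μ : Fin (n + 1) → Measure α) [∀ k, SigmaFinite (μ k)] {f : (Fin (n + 1) → α) → ℝ≥0∞}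
    (hf : Measurable f) :
    ∫⁻ x, f x ∂Measure.pi μ
      = ∫⁻ t, ∫⁻ y, f (Fin.cons t y) ∂Measure.pi (fun k => μ k.succ) ∂μ 0 := by
  have e := (measurePreserving_piFinSuccAbove μ 0).symm
  rw [← e.lintegral_comp hf]
  refine (lintegral_prod _ (hf.comp e.measurable).aemeasurable).trans ?_
  simp only [MeasurableEquiv.piFinSuccAbove_symm_apply, Fin.insertNthEquiv_zero,
    Function.comp_apply, Fin.succAbove_zero]
  rfl

/-- **Harris inequality** for product probability measures. -/
theorem lintegral_mul_lintegral_le_lintegral_mul_pi_of_antitone {α : Type*}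
    [MeasurableSpace α] [LinearOrder α] {n : ℕ} (μ : Fin n → Measure α)
    [∀ k, IsProbabilityMeasure (μ k)] {f g : (Fin n → α) → ℝ≥0∞} (hf : Measurable f)
    (hg : Measurable g) (hf_anti : Antitone f) (hg_anti : Antitone g) :
    (∫⁻ x, f x ∂Measure.pi μ) * ∫⁻ x, g x ∂Measure.pi μ ≤ ∫⁻ x, f x * g x ∂Measure.pi μ := by
  induction n with
  | zero =>
    have hconst (h : (Fin 0 → α) → ℝ≥0∞) : ∫⁻ x, h x ∂Measure.pi μ = h default := by
      simp [Unique.eq_default]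
    rw [hconst f, hconst g, hconst fun x => f x * g x]
  | succ n ih =>
    set ν := Measure.pi fun k : Fin n => μ k.succ
    let F t := ∫⁻ y, f (Fin.cons t y) ∂ν
    let G t := ∫⁻ y, g (Fin.cons t y) ∂ν
    have hF : Measurable F :=
      (hf.comp (measurable_fst.finCons measurable_snd)).lintegral_prod_right'
    have hG : Measurable G :=
      (hg.comp (measurable_fst.finCons measurable_snd)).lintegral_prod_right'
    have hFG : Monovary F G :=
      Antitone.monovary
        (fun t t' h => lintegral_mono fun y => hf_anti (Fin.cons_le_cons.2 ⟨h, le_rfl⟩))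
        (fun t t' h => lintegral_mono fun y => hg_anti (Fin.cons_le_cons.2 ⟨h, le_rfl⟩))
    calc (∫⁻ x, f x ∂Measure.pi μ) * ∫⁻ x, g x ∂Measure.pi μ
        = (∫⁻ t, F t ∂μ 0) * ∫⁻ t, G t ∂μ 0 := by
          rw [lintegral_pi_fin_succ μ hf, lintegral_pi_fin_succ μ hg]
      _ ≤ ∫⁻ t, F t * G t ∂μ 0 :=
          lintegral_mul_lintegral_le_lintegral_mul_of_monovary _ hF hG hFG
      _ ≤ ∫⁻ t, ∫⁻ y, f (Fin.cons t y) * g (Fin.cons t y) ∂ν ∂μ 0 :=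
          lintegral_mono fun t => ih _
            (hf.comp (measurable_const.finCons measurable_id))
            (hg.comp (measurable_const.finCons measurable_id))
            (fun y y' h => hf_anti (Fin.cons_le_cons.2 ⟨le_rfl, h⟩))
            (fun y y' h => hg_anti (Fin.cons_le_cons.2 ⟨le_rfl, h⟩))
      _ = ∫⁻ x, f x * g x ∂Measure.pi μ :=
          (lintegral_pi_fin_succ μ (f := fun x => f x * g x) (hf.mul hg)).symm

theorem Measure.pi_mul_pi_le_pi_inter_of_isLowerSet {α : Type*} [MeasurableSpace α]
    [LinearOrder α] {n : ℕ} (μ : Fin n → Measure α) [∀ k, IsProbabilityMeasure (μ k)]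
    {s t : Set (Fin n → α)} (hs : MeasurableSet s) (ht : MeasurableSet t)
    (hs_low : IsLowerSet s) (ht_low : IsLowerSet t) :
    Measure.pi μ s * Measure.pi μ t ≤ Measure.pi μ (s ∩ t) := by
  have h := lintegral_mul_lintegral_le_lintegral_mul_pi_of_antitone μ
    (measurable_one.indicator hs) (measurable_one.indicator ht)
    hs_low.antitone_indicator_one ht_low.antitone_indicator_one
  rwa [lintegral_indicator_one hs, lintegral_indicator_one ht, ← Pi.mul_def,
    ← Set.inter_indicator_one, lintegral_indicator_one (hs.inter ht)] at h

end MeasureTheory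

theorem orderStat_positive_quadrant_dependent_general {Ω : Type*} [MeasurableSpace Ω]
    (P : Measure Ω) [IsProbabilityMeasure P] {n : ℕ}
    (S : Fin n → Ω → ℝ) (hmeas : ∀ i, Measurable (S i))
    (hiid : iIndepFun S P)
    (i j : Fin n) (a b : ℝ) :
    P {ω | orderStat S i ω < a} * P {ω | orderStat S j ω < b}
      ≤ P {ω | orderStat S i ω < a ∧ orderStat S j ω < b} := by
  set X : Ω → Fin n → ℝ := fun ω k => S k ω
  have hX : Measurable X := measurable_pi_lambda _ hmeas
  have hlaw : P.map X = Measure.pi fun k => P.map (S k) :=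
    hiid.map_fun_eq_pi_map fun k => (hmeas k).aemeasurable
  have : ∀ k, IsProbabilityMeasure (P.map (S k)) :=
    fun k => Measure.isProbabilityMeasure_map (hmeas k).aemeasurable
  have hevent (m : Fin n) (c : ℝ) :
      {ω | orderStat S m ω < c} = X ⁻¹' {x | (m : ℕ) < #{k | x k < c}} :=
    Set.ext fun ω => orderStat_lt_iff S m ω c
  have hmeasSet (m : Fin n) (c : ℝ) := measurableSet_setOf_lt_card_filter_lt (ι := Fin n) m c
  rw [Set.ofPred_and, hevent, hevent, ← Set.preimage_inter,
    ← Measure.map_apply hX (hmeasSet i a), ← Measure.map_apply hX (hmeasSet j b),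
    ← Measure.map_apply hX ((hmeasSet i a).inter (hmeasSet j b)), hlaw]
  exact Measure.pi_mul_pi_le_pi_inter_of_isLowerSet _ (hmeasSet i a) (hmeasSet j b)
    (isLowerSet_setOf_lt_card_filter_lt _ _) (isLowerSet_setOf_lt_card_filter_lt _ _)

/-- Order statistics of an i.i.d. continuous sample are positively quadrant dependent:
for `i < j` and all real `a, b`,
`P(S_(i) < a, S_(j) < b) ≥ P(S_(i) < a) · P(S_(j) < b)`. -/
theorem orderStat_positive_quadrant_dependent {Ω : Type*} [MeasurableSpace Ω]
    (P : Measure Ω) [IsProbabilityMeasure P] {n : ℕ}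
    (S : Fin n → Ω → ℝ) (hmeas : ∀ i, Measurable (S i))
    (μ : Measure ℝ)
    (hiid : iIndepFun S P)
    (hdist : ∀ i, Measure.map (S i) P = μ)
    (hcont : ∀ x : ℝ, μ {x} = 0)
    (i j : Fin n) (hij : i < j) (a b : ℝ) :
    P {ω | orderStat S i ω < a} * P {ω | orderStat S j ω < b}
      ≤ P {ω | orderStat S i ω < a ∧ orderStat S j ω < b} :=
  orderStat_positive_quadrant_dependent_general P S hmeas hiid i j a b
end
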